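/- Let (Ω, 𝒜, P) be a probability space, let n, d ≥ 1 and 1 ≤ m ≤ d, let μ : Fin d → ℝ satisfy 0 < μ j < 1 for every j ≥ m, and let X : Fin n → Fin d → Ω → ℕ have left-repeated structure with midpoint m and parameter μ. Let θ : Ω → Bool satisfy P(θ = true) = 1/2 with θ independent of the whole family (X i j). Let y : Fin d → ℕ and k : Fin d → ℕ satisfy: y j ≤ 1 and y j ≤ k j ≤ n for every j ≥ m, and k j = k m and y j = y m for every j < m. Define E := {ω : if θ(ω) = true then for every j, y j + Σ_{i < n−1} X i j (ω) = k j, else for every j, Σ_{i < n} X i j (ω) = k j}. Then P(E) > 0, P(θ = true | E) < 1, and for every real threshold T: P(θ = true | E) / (1 − P(θ = true | E)) > T if and only if ∏_{j ≥ m} (if y j = 1 then (k j / n) / μ j else (1 − k j / n) / (1 − μ j)) > T. (Left/Right Distributed Correctness for the fixed side = left: the Bayesian posterior-odds attack with threshold T is equivalent to the likelihood ratio test attack clipped to attributes m through d with the same threshold.) -/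

import Mathlib

/-!
Conditioning on `E` splits over `θ`: with `A` the event that the first `n - 1` records together
with the target `y` produce the counts `k`, and `B` the event that all `n` records do,
`P(E) = (P(A) + P(B)) / 2` and `P(θ | E) = P(A) / (P(A) + P(B))`, so the posterior odds are
`P(A) / P(B)`. Attributes below the midpoint are copies of attribute `m` carrying the same `k`
and `y`, so both events only constrain the attributes `j ≥ m`. There the column sums are
independent binomial variables, and `P(A) / P(B)` is the product over `j ≥ m` of
`Bin(n - 1, μ j)(k j - y j) / Bin(n, μ j)(k j)`, which is exactly the likelihood-ratio factor.
-/

open MeasureTheory ProbabilityTheory Finset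

def LeftRepeated {Ω : Type*} [MeasurableSpace Ω] (P : Measure Ω)
    {n d : ℕ} (m : ℕ) (X : Fin n → Fin d → Ω → ℕ) (μ : Fin d → ℝ) : Prop :=
  (∀ i j, Measurable (X i j)) ∧
  iIndepFun
    (fun p : Fin n × {j : Fin d // m - 1 ≤ (j : ℕ)} => X p.1 p.2.1) P ∧
  (∀ i, ∀ j : Fin d, m - 1 ≤ (j : ℕ) →
    (∀ ω, X i j ω = 0 ∨ X i j ω = 1) ∧ (P {ω | X i j ω = 1}).toReal = μ j) ∧
  (∀ i, ∀ j : Fin d, (j : ℕ) < m - 1 →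
    ∀ jm : Fin d, (jm : ℕ) = m - 1 → X i j = X i jm)

def binomialWeight (q : ℝ) (n k : ℕ) : ℝ := n.choose k * q ^ k * (1 - q) ^ (n - k)

section binomialWeight

variable {q : ℝ} {n k : ℕ}

lemma binomialWeight_pos (hq₀ : 0 < q) (hq₁ : q < 1) (hkn : k ≤ n) :
    0 < binomialWeight q n k := by
  have : 0 < 1 - q := by linarith
  have : (0 : ℝ) < n.choose k := by exact_mod_cast Nat.choose_pos hkn
  unfold binomialWeight
  positivity

lemma binomialWeight_sub_one_sub_one (hq : q ≠ 0) (hk : 1 ≤ k) (hkn : k ≤ n) :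
    binomialWeight q (n - 1) (k - 1) = binomialWeight q n k * (k / n / q) := by
  obtain ⟨n, rfl⟩ : ∃ n', n = n' + 1 := ⟨n - 1, by omega⟩
  obtain ⟨k, rfl⟩ : ∃ k', k = k' + 1 := ⟨k - 1, by omega⟩
  have hpascal : ((n + 1) * n.choose k : ℝ) = (n + 1).choose (k + 1) * (k + 1) := by
    exact_mod_cast Nat.add_one_mul_choose_eq n k
  simp only [binomialWeight, Nat.add_sub_cancel, Nat.add_sub_add_right, pow_succ]
  field_simp
  push_cast
  linear_combination (1 - q) ^ (n - k) * hpascal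

lemma binomialWeight_sub_one (hq : q ≠ 1) (hn : 1 ≤ n) (hkn : k ≤ n) :
    binomialWeight q (n - 1) k = binomialWeight q n k * ((1 - k / n) / (1 - q)) := by
  obtain ⟨n, rfl⟩ : ∃ n', n = n' + 1 := ⟨n - 1, by omega⟩
  have hq' : 1 - q ≠ 0 := sub_ne_zero.2 hq.symm
  rcases Nat.lt_or_eq_of_le hkn with hk | rfl
  · have hpascal : (n.choose k * (n + 1) : ℝ) = (n + 1).choose k * ((n + 1 : ℕ) - k : ℕ) := by
      exact_mod_cast Nat.choose_mul_succ_eq n k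
    have hexp : n + 1 - k = n - k + 1 := by omega
    simp only [binomialWeight, Nat.add_sub_cancel, hexp, pow_succ]
    rw [Nat.cast_sub hkn] at hpascal
    field_simp
    push_cast at hpascal ⊢
    linear_combination q ^ k * hpascal
  · have hself : ((n : ℝ) + 1) / (n + 1) = 1 := div_self (by positivity)
    simp [binomialWeight, hself]

lemma binomialWeight_sub_eq_mul_ite {y : ℕ} (hq₀ : q ≠ 0) (hq₁ : q ≠ 1) (hn : 1 ≤ n)
    (hy : y ≤ 1) (hyk : y ≤ k) (hkn : k ≤ n) :
    binomialWeight q (n - 1) (k - y) =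
      binomialWeight q n k * if y = 1 then k / n / q else (1 - k / n) / (1 - q) := by
  rcases Nat.le_one_iff_eq_zero_or_eq_one.1 hy with rfl | rfl
  · simpa using binomialWeight_sub_one hq₁ hn hkn
  · simpa using binomialWeight_sub_one_sub_one hq₀ hyk hkn

end binomialWeight

lemma forall_iff_forall_subtype_of_copy {α : Type*} {p Q : α → Prop} {a₀ : α} (ha₀ : p a₀)
    (hQ : ∀ a, ¬ p a → (Q a ↔ Q a₀)) : (∀ a, Q a) ↔ ∀ a : Subtype p, Q a := by
  refine ⟨fun h a => h a, fun h a => ?_⟩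
  by_cases ha : p a
  exacts [h ⟨a, ha⟩, (hQ a ha).2 (h ⟨a₀, ha₀⟩)]

lemma setOf_filter_eq_one_eq_iInter {Ω ι : Type*} [DecidableEq ι] {f : ι → Ω → ℕ}
    {I s : Finset ι} (h01 : ∀ i ∈ I, ∀ ω, f i ω = 0 ∨ f i ω = 1) (hs : s ⊆ I) :
    {ω | I.filter (f · ω = 1) = s} = ⋂ i ∈ I, f i ⁻¹' {if i ∈ s then 1 else 0} := by
  ext ω
  simp only [Set.mem_ofPred_eq, Set.mem_iInter, Set.mem_preimage, Set.mem_singleton_iff,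
    Finset.ext_iff, mem_filter]
  constructor
  · intro hω i hi
    specialize hω i
    rcases h01 i hi ω with h0 | h1 <;> split_ifs <;> simp_all
  · intro hω i
    by_cases hi : i ∈ I
    · have := hω i hi
      split_ifs at this <;> simp_all
    · exact iff_of_false (fun h => hi h.1) (fun h => hi (hs h))

lemma setOf_ite_eq_union {Ω : Type*} {θ : Ω → Bool} {A B : Set Ω} :
    {ω | if θ ω = true then ω ∈ A else ω ∈ B} =
      {ω | θ ω = true} ∩ A ∪ {ω | θ ω = false} ∩ B := by
  ext ω
  by_cases h : θ ω <;> simp [h]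

namespace ProbabilityTheory

variable {Ω : Type*} [MeasurableSpace Ω] {P : Measure Ω}

lemma measureReal_preimage_zero_of_zero_or_one [IsProbabilityMeasure P] {g : Ω → ℕ}
    (hg : Measurable g) (h01 : ∀ ω, g ω = 0 ∨ g ω = 1) :
    P.real (g ⁻¹' {0}) = 1 - P.real (g ⁻¹' {1}) := by
  have hcompl : g ⁻¹' {0} = (g ⁻¹' {1})ᶜ := by
    ext ω
    rcases h01 ω with h | h <;> simp [h]
  rw [hcompl, probReal_compl_eq_one_sub (hg (measurableSet_singleton 1))]

section Bernoulli

variable {ι : Type*} {f : ι → Ω → ℕ} {I : Finset ι} {q : ℝ}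

lemma iIndepFun.measureReal_filter_eq_one_eq [DecidableEq ι] (hf : ∀ i, Measurable (f i))
    (h : iIndepFun f P) (h01 : ∀ i ∈ I, ∀ ω, f i ω = 0 ∨ f i ω = 1)
    (hq : ∀ i ∈ I, P.real {ω | f i ω = 1} = q) {s : Finset ι} (hs : s ⊆ I) :
    P.real {ω | I.filter (f · ω = 1) = s} = q ^ #s * (1 - q) ^ (#I - #s) := by
  have := h.isProbabilityMeasure
  have hfactor (i) (hi : i ∈ I) :
      P.real (f i ⁻¹' {if i ∈ s then 1 else 0}) = if i ∈ s then q else 1 - q := by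
    split_ifs
    · exact hq i hi
    · rw [measureReal_preimage_zero_of_zero_or_one (hf i) (h01 i hi)]
      exact congrArg (1 - ·) (hq i hi)
  rw [setOf_filter_eq_one_eq_iInter h01 hs, measureReal_def,
    h.measure_inter_preimage_eq_mul I (fun _ _ => measurableSet_singleton _), ENNReal.toReal_prod]
  refine (prod_congr rfl hfactor).trans ?_
  rw [prod_ite, prod_const, prod_const, filter_mem_eq_inter, inter_eq_right.2 hs, filter_not,
    card_sdiff_of_subset (filter_subset _ _), filter_mem_eq_inter, inter_eq_right.2 hs]

lemma iIndepFun.measureReal_sum_eq_binomialWeight (hf : ∀ i, Measurable (f i))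
    (h : iIndepFun f P) (h01 : ∀ i ∈ I, ∀ ω, f i ω = 0 ∨ f i ω = 1)
    (hq : ∀ i ∈ I, P.real {ω | f i ω = 1} = q) (c : ℕ) :
    P.real {ω | ∑ i ∈ I, f i ω = c} = binomialWeight q #I c := by
  classical
  have := h.isProbabilityMeasure
  have hsum (ω) : ∑ i ∈ I, f i ω = #(I.filter (f · ω = 1)) := by
    rw [card_filter]
    refine sum_congr rfl fun i hi => ?_
    rcases h01 i hi ω with h0 | h1 <;> simp [*]
  have hevent : {ω | ∑ i ∈ I, f i ω = c} =
      (fun ω => I.filter (f · ω = 1)) ⁻¹' ↑(I.powersetCard c) := by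
    ext ω
    simp [hsum, mem_powersetCard, filter_subset]
  have hmeas (s) (hs : s ∈ I.powersetCard c) :
      MeasurableSet {ω | I.filter (f · ω = 1) = s} := by
    rw [setOf_filter_eq_one_eq_iInter h01 (mem_powersetCard.1 hs).1]
    exact .biInter I.countable_toSet fun i _ => hf i (measurableSet_singleton _)
  rw [hevent, ← sum_measureReal_preimage_singleton _ hmeas]
  refine (sum_congr rfl fun s hs =>
    h.measureReal_filter_eq_one_eq hf h01 hq (mem_powersetCard.1 hs).1).trans ?_
  rw [sum_congr rfl fun s hs => by rw [(mem_powersetCard.1 hs).2], sum_const, card_powersetCard,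
    nsmul_eq_mul, binomialWeight, mul_assoc]

end Bernoulli

lemma iIndepFun.curry {ι κ 𝓧 : Type*} [MeasurableSpace 𝓧] {X : ι → κ → Ω → 𝓧}
    (hX : ∀ i j, Measurable (X i j)) (h : iIndepFun (fun p : ι × κ => X p.1 p.2) P) :
    iIndepFun (fun i ω j => X i j ω) P := by
  have := h.isProbabilityMeasure
  have (i : ι) (j : κ) : IsProbabilityMeasure (P.map (X i j)) :=
    Measure.isProbabilityMeasure_map (hX i j).aemeasurable
  have hrow (i : ι) :
      P.map (fun ω j => X i j ω) = Measure.infinitePi (fun j => P.map (X i j)) :=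
    (h.precomp (Prod.mk_right_injective i)).map_fun_eq_infinitePi_map (hX i)
  have hjoint := h.map_fun_eq_infinitePi_map (fun p : ι × κ => hX p.1 p.2)
  rw [iIndepFun_iff_map_fun_eq_infinitePi_map (fun i => by fun_prop)]
  calc P.map (fun ω i j => X i j ω)
      = (P.map (fun ω (p : ι × κ) => X p.1 p.2 ω)).map (MeasurableEquiv.curry ι κ 𝓧) := by
        rw [Measure.map_map (by fun_prop) (by fun_prop)]
        rfl
    _ = Measure.infinitePi fun i => Measure.infinitePi fun j => P.map (X i j) := by
        rw [hjoint]
        exact Measure.infinitePi_map_curry (fun i j => P.map (X i j))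
    _ = _ := by simp_rw [hrow]

lemma iIndepFun.measureReal_iInter_sum_eq_prod {ι κ : Type*} [Fintype κ] {X : ι → κ → Ω → ℕ}
    (hX : ∀ i j, Measurable (X i j)) (h : iIndepFun (fun p : ι × κ => X p.1 p.2) P)
    {I : Finset ι} {q : κ → ℝ} (h01 : ∀ i ∈ I, ∀ j ω, X i j ω = 0 ∨ X i j ω = 1)
    (hq : ∀ i ∈ I, ∀ j, P.real {ω | X i j ω = 1} = q j) (c : κ → ℕ) :
    P.real (⋂ j, {ω | ∑ i ∈ I, X i j ω = c j}) = ∏ j, binomialWeight (q j) #I (c j) := by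
  have hcols : iIndepFun (fun j ω => ∑ i ∈ I, X i j ω) P :=
    ((h.precomp Prod.swap_injective).curry (X := fun j i => X i j) fun j i => hX i j).comp
      (fun _ v => ∑ i ∈ I, v i) fun _ => by fun_prop
  rw [measureReal_def, hcols.meas_iInter (s := fun j => {ω | ∑ i ∈ I, X i j ω = c j})
      fun j => ⟨{c j}, measurableSet_singleton _, rfl⟩, ENNReal.toReal_prod]
  refine prod_congr rfl fun j _ => ?_
  exact (h.precomp (Prod.mk_left_injective j)).measureReal_sum_eq_binomialWeight
    (fun i => hX i j) (fun i hi => h01 i hi j) (fun i hi => hq i hi j) (c j)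

section FairCoin

variable {θ : Ω → Bool} {A B : Set Ω}

lemma measureReal_ite_eq [IsFiniteMeasure P] (hθ : Measurable θ) (hB : MeasurableSet B)
    (hθA : P ({ω | θ ω = true} ∩ A) = P {ω | θ ω = true} * P A)
    (hθB : P ({ω | θ ω = false} ∩ B) = P {ω | θ ω = false} * P B) :
    P.real {ω | if θ ω = true then ω ∈ A else ω ∈ B} =
      P.real {ω | θ ω = true} * P.real A + P.real {ω | θ ω = false} * P.real B := by
  have hdisj : Disjoint ({ω | θ ω = true} ∩ A) ({ω | θ ω = false} ∩ B) :=
    Set.disjoint_left.2 fun ω h₁ h₂ => by simp_all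
  rw [setOf_ite_eq_union, measureReal_union hdisj ((hθ (measurableSet_singleton false)).inter hB),
    measureReal_def, measureReal_def, hθA, hθB, ENNReal.toReal_mul, ENNReal.toReal_mul]
  rfl

lemma cond_ite_eq (hθ : Measurable θ) (hA : MeasurableSet A)
    (hB : MeasurableSet B) (hθA : P ({ω | θ ω = true} ∩ A) = P {ω | θ ω = true} * P A) :
    (P[{ω | θ ω = true} | {ω | if θ ω = true then ω ∈ A else ω ∈ B}]).toReal =
      P.real {ω | θ ω = true} * P.real A / P.real {ω | if θ ω = true then ω ∈ A else ω ∈ B} := by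
  have hE : MeasurableSet {ω | if θ ω = true then ω ∈ A else ω ∈ B} := by
    rw [setOf_ite_eq_union]
    exact ((hθ (measurableSet_singleton true)).inter hA).union
      ((hθ (measurableSet_singleton false)).inter hB)
  have hinter : {ω | if θ ω = true then ω ∈ A else ω ∈ B} ∩ {ω | θ ω = true} =
      {ω | θ ω = true} ∩ A := by
    ext ω
    by_cases h : θ ω <;> simp [h]
  rw [cond_apply hE, hinter, hθA, ENNReal.toReal_mul, ENNReal.toReal_inv, ENNReal.toReal_mul,
    inv_mul_eq_div]
  rfl

lemma posterior_odds_eq_of_fair_coin [IsProbabilityMeasure P] (hθ : Measurable θ)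
    (hA : MeasurableSet A) (hB : MeasurableSet B)
    (hθA : P ({ω | θ ω = true} ∩ A) = P {ω | θ ω = true} * P A)
    (hθB : P ({ω | θ ω = false} ∩ B) = P {ω | θ ω = false} * P B)
    (hθhalf : P.real {ω | θ ω = true} = 1 / 2) (hB_pos : 0 < P.real B) {E : Set Ω}
    (hE : E = {ω | if θ ω = true then ω ∈ A else ω ∈ B}) :
    0 < P.real E ∧ (P[{ω | θ ω = true} | E]).toReal < 1 ∧
      (P[{ω | θ ω = true} | E]).toReal / (1 - (P[{ω | θ ω = true} | E]).toReal) =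
        P.real A / P.real B := by
  have hθfalse : P.real {ω | θ ω = false} = 1 / 2 := by
    have hcompl : {ω | θ ω = false} = {ω | θ ω = true}ᶜ := by ext ω; simp
    have hT : MeasurableSet {ω | θ ω = true} := hθ (measurableSet_singleton true)
    rw [hcompl, probReal_compl_eq_one_sub hT, hθhalf]
    norm_num
  have hA_nonneg : 0 ≤ P.real A := measureReal_nonneg
  have hAB : P.real A + P.real B ≠ 0 := by positivity
  have hPE : P.real E = 1 / 2 * (P.real A + P.real B) := by
    rw [hE, measureReal_ite_eq hθ hB hθA hθB, hθhalf, hθfalse, mul_add]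
  have hpost : (P[{ω | θ ω = true} | E]).toReal = P.real A / (P.real A + P.real B) := by
    rw [hE, cond_ite_eq hθ hA hB hθA, ← hE, hPE, hθhalf, mul_div_mul_left _ _ (by norm_num)]
  refine ⟨by rw [hPE]; positivity, ?_, ?_⟩
  · rw [hpost, div_lt_one (by positivity)]
    linarith
  · rw [hpost, one_sub_div hAB, add_sub_cancel_left, div_div_div_cancel_right₀ hAB]

end FairCoin

end ProbabilityTheory

section LeftRepeated

variable {Ω : Type*} [MeasurableSpace Ω] {P : Measure Ω} {n d m : ℕ}
  {X : Fin n → Fin d → Ω → ℕ} {μ : Fin d → ℝ} {k : Fin d → ℕ}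

lemma LeftRepeated.measureReal_setOf_forall_eq_prod (hX : LeftRepeated P m X μ)
    (I : Finset (Fin n)) {y : Fin d → ℕ} (jm : Fin d) (hjm : (jm : ℕ) = m - 1)
    (hyk : ∀ j : Fin d, m - 1 ≤ (j : ℕ) → y j ≤ k j)
    (hrep : ∀ j : Fin d, (j : ℕ) < m - 1 → k j = k jm ∧ y j = y jm) :
    P.real {ω | ∀ j, y j + ∑ i ∈ I, X i j ω = k j} =
      ∏ j ∈ univ.filter (fun j : Fin d => m - 1 ≤ (j : ℕ)), binomialWeight (μ j) #I (k j - y j) := by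
  obtain ⟨hXm, hXind, hXber, hXcopy⟩ := hX
  have hevent : {ω | ∀ j, y j + ∑ i ∈ I, X i j ω = k j} =
      ⋂ j : {j : Fin d // m - 1 ≤ (j : ℕ)}, {ω | ∑ i ∈ I, X i j ω = k j - y j} := by
    ext ω
    simp only [Set.mem_ofPred_eq, Set.mem_iInter]
    rw [forall_iff_forall_subtype_of_copy (p := fun j : Fin d => m - 1 ≤ (j : ℕ)) hjm.ge
      fun j hj => ?_]
    · exact forall_congr' fun j => by have := hyk j j.2; omega
    · have hj' : (j : ℕ) < m - 1 := not_le.1 hj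
      rw [(hrep j hj').1, (hrep j hj').2, sum_congr rfl fun i _ => by rw [hXcopy i j hj' jm hjm]]
  rw [hevent, hXind.measureReal_iInter_sum_eq_prod
    (X := fun i (j : {j : Fin d // m - 1 ≤ (j : ℕ)}) => X i j) (fun i j => hXm i j)
    (fun i _ j => (hXber i j j.2).1) (fun i _ j => (hXber i j j.2).2)]
  exact (prod_subtype (univ.filter fun j : Fin d => m - 1 ≤ (j : ℕ)) (fun j => by simp)
    fun j => binomialWeight (μ j) #I (k j - y j)).symm

lemma LeftRepeated.measureReal_counts_eq_prod (hX : LeftRepeated P m X μ) (jm : Fin d)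
    (hjm : (jm : ℕ) = m - 1) (hrep : ∀ j : Fin d, (j : ℕ) < m - 1 → k j = k jm) :
    P.real {ω | ∀ j, ∑ i : Fin n, X i j ω = k j} =
      ∏ j ∈ univ.filter (fun j : Fin d => m - 1 ≤ (j : ℕ)), binomialWeight (μ j) n (k j) := by
  have := hX.measureReal_setOf_forall_eq_prod univ (y := 0) jm hjm (fun _ _ => Nat.zero_le _)
    fun j hj => ⟨hrep j hj, rfl⟩
  simpa only [Pi.zero_apply, zero_add, tsub_zero, card_univ, Fintype.card_fin] using this

lemma LeftRepeated.measureReal_counts_pos (hX : LeftRepeated P m X μ)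
    (hμ : ∀ j : Fin d, m - 1 ≤ (j : ℕ) → 0 < μ j ∧ μ j < 1)
    (hkn : ∀ j : Fin d, m - 1 ≤ (j : ℕ) → k j ≤ n) (jm : Fin d)
    (hjm : (jm : ℕ) = m - 1) (hrep : ∀ j : Fin d, (j : ℕ) < m - 1 → k j = k jm) :
    0 < P.real {ω | ∀ j, ∑ i : Fin n, X i j ω = k j} := by
  rw [hX.measureReal_counts_eq_prod jm hjm hrep]
  refine prod_pos fun j hj => ?_
  obtain ⟨hμ₀, hμ₁⟩ := hμ j (mem_filter.1 hj).2
  exact binomialWeight_pos hμ₀ hμ₁ (hkn j (mem_filter.1 hj).2)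

lemma LeftRepeated.measureReal_target_eq_mul (hX : LeftRepeated P m X μ) (hn : 1 ≤ n)
    (hμ : ∀ j : Fin d, m - 1 ≤ (j : ℕ) → 0 < μ j ∧ μ j < 1) {y : Fin d → ℕ}
    (hyk : ∀ j : Fin d, m - 1 ≤ (j : ℕ) → y j ≤ 1 ∧ y j ≤ k j ∧ k j ≤ n) (jm : Fin d)
    (hjm : (jm : ℕ) = m - 1) (hrep : ∀ j : Fin d, (j : ℕ) < m - 1 → k j = k jm ∧ y j = y jm) :
    P.real {ω | ∀ j, y j + ∑ i ∈ univ.filter (fun i : Fin n => (i : ℕ) < n - 1), X i j ω = k j} =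
      P.real {ω | ∀ j, ∑ i : Fin n, X i j ω = k j} *
        ∏ j ∈ univ.filter (fun j : Fin d => m - 1 ≤ (j : ℕ)),
          (if y j = 1 then ((k j : ℝ) / n) / μ j else (1 - (k j : ℝ) / n) / (1 - μ j)) := by
  have hcard : #(univ.filter fun i : Fin n => (i : ℕ) < n - 1) = n - 1 := by
    rw [Fin.card_filter_val_lt]
    omega
  rw [hX.measureReal_setOf_forall_eq_prod _ jm hjm (fun j hj => (hyk j hj).2.1) hrep, hcard,
    hX.measureReal_counts_eq_prod jm hjm fun j hj => (hrep j hj).1, ← prod_mul_distrib]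
  refine prod_congr rfl fun j hj => ?_
  obtain ⟨hμ₀, hμ₁⟩ := hμ j (mem_filter.1 hj).2
  obtain ⟨hy, hyk, hkn⟩ := hyk j (mem_filter.1 hj).2
  exact binomialWeight_sub_eq_mul_ite hμ₀.ne' hμ₁.ne hn hy hyk hkn

end LeftRepeated

/-- **Left/Right Distributed Correctness (fixed side = left).** On a population
whose attributes below the midpoint `m` are exact copies of attribute `m`, the
Bayesian posterior-odds attack with threshold `T` is equivalent to the
likelihood ratio test attack clipped to attributes `m` through `d` with the
same threshold. -/
theorem left_distributed_correctness {Ω : Type*} [MeasurableSpace Ω]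
    (P : Measure Ω) [IsProbabilityMeasure P] (n d m : ℕ)
    (hn : 1 ≤ n) (hm : 1 ≤ m) (hmd : m ≤ d)
    (μ : Fin d → ℝ) (hμ : ∀ j : Fin d, m - 1 ≤ (j : ℕ) → 0 < μ j ∧ μ j < 1)
    (X : Fin n → Fin d → Ω → ℕ) (hX : LeftRepeated P m X μ)
    (θ : Ω → Bool) (hθmeas : Measurable θ)
    (hθhalf : (P {ω | θ ω = true}).toReal = 1 / 2)
    (hθindep : IndepFun θ (fun ω (p : Fin n × Fin d) => X p.1 p.2 ω) P)
    (y : Fin d → ℕ) (k : Fin d → ℕ)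
    (hyk : ∀ j : Fin d, m - 1 ≤ (j : ℕ) → y j ≤ 1 ∧ y j ≤ k j ∧ k j ≤ n)
    (hrep : ∀ j : Fin d, (j : ℕ) < m - 1 →
      k j = k ⟨m - 1, by omega⟩ ∧ y j = y ⟨m - 1, by omega⟩)
    (E : Set Ω)
    (hE : E = {ω | if θ ω = true
      then ∀ j, y j + ∑ i ∈ univ.filter (fun i : Fin n => (i : ℕ) < n - 1),
        X i j ω = k j
      else ∀ j, (∑ i : Fin n, X i j ω) = k j}) :
    0 < (P E).toReal ∧
    (P[{ω | θ ω = true} | E]).toReal < 1 ∧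
    ∀ T : ℝ,
      (P[{ω | θ ω = true} | E]).toReal /
          (1 - (P[{ω | θ ω = true} | E]).toReal) > T ↔
      (∏ j ∈ univ.filter (fun j : Fin d => m - 1 ≤ (j : ℕ)),
        (if y j = 1 then ((k j : ℝ) / n) / μ j
          else (1 - (k j : ℝ) / n) / (1 - μ j))) > T := by
  set I₁ := univ.filter (fun i : Fin n => (i : ℕ) < n - 1)
  set A := {ω | ∀ j, y j + ∑ i ∈ I₁, X i j ω = k j}
  set B := {ω | ∀ j, ∑ i : Fin n, X i j ω = k j}
  set g := fun ω (p : Fin n × Fin d) => X p.1 p.2 ω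
  have hg : Measurable g := measurable_pi_lambda _ fun p => hX.1 p.1 p.2
  have hθg (b : Bool) (S : Set (Fin n × Fin d → ℕ)) :
      P ({ω | θ ω = b} ∩ g ⁻¹' S) = P {ω | θ ω = b} * P (g ⁻¹' S) :=
    hθindep.measure_inter_preimage_eq_mul _ _ (measurableSet_singleton b)
      (Set.to_countable S).measurableSet
  set SA := {v : Fin n × Fin d → ℕ | ∀ j, y j + ∑ i ∈ I₁, v (i, j) = k j}
  set SB := {v : Fin n × Fin d → ℕ | ∀ j, ∑ i : Fin n, v (i, j) = k j}
  have hB_pos : 0 < P.real B :=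
    hX.measureReal_counts_pos hμ (fun j hj => (hyk j hj).2.2) _ rfl fun j hj => (hrep j hj).1
  obtain ⟨hE_pos, hpost_lt_one, hodds⟩ := posterior_odds_eq_of_fair_coin (A := A) (B := B)
    hθmeas (hg (Set.to_countable SA).measurableSet) (hg (Set.to_countable SB).measurableSet)
    (hθg true SA) (hθg false SB) hθhalf hB_pos hE
  refine ⟨hE_pos, hpost_lt_one, fun T => ?_⟩
  rw [hodds, hX.measureReal_target_eq_mul hn hμ hyk _ rfl hrep, mul_div_cancel_left₀ _ hB_pos.ne']
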